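/- The derivative of the Kummer function with respect to its first parameter satisfies ∂M/∂a(a,b,x) = Σ_{r=1}^∞ (a)_r x^r/((b)_r r!) · Σ_{m=1}^r 1/(m-1+a), valid for a > 0, b > 0, x real (the inner sum being Σ_{m=1}^r 1/(m-1+a) = ψ(a+r) - ψ(a) summed appropriately). -/

import Mathlib

/-!
Differentiate the series termwise: `d/da (a)_r = (a)_r · Σ_{m<r} 1/(m+a)`.
On `a' ∈ (a/2, a+1)` this sum is at most `2r/a ≤ 2^(r+1)/a`, and `(a')_r ≤ K^r (b)_r` with
`K = max 1 ((a+1)/b)` (compare the factors `a' + j ≤ K (b + j)`), so the differentiated series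
is dominated by a multiple of the exponential series `Σ (2K|x|)^r / r!`, which justifies the
interchange.
-/

/-- The Kummer confluent hypergeometric function `M(a,b,x)`, real parameters. -/
noncomputable def kummerM (a b x : ℝ) : ℝ :=
  ∑' n : ℕ, (ascPochhammer ℝ n).eval a / ((ascPochhammer ℝ n).eval b * n.factorial) * x ^ n

open Finset

lemma ascPochhammer_eval_le_pow_mul_eval {s t K : ℝ} (hs : 0 ≤ s)
    (h : ∀ j : ℕ, s + j ≤ K * (t + j)) (n : ℕ) :
    (ascPochhammer ℝ n).eval s ≤ K ^ n * (ascPochhammer ℝ n).eval t := by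
  induction n with
  | zero => simp
  | succ n ih =>
    have hpos : 0 ≤ (ascPochhammer ℝ n).eval s := by
      rcases hs.eq_or_lt with rfl | hs
      · rcases n with _ | n <;> simp [ascPochhammer_ne_zero_eval_zero]
      · exact (ascPochhammer_pos n s hs).le
    rw [ascPochhammer_succ_eval, ascPochhammer_succ_eval, pow_succ]
    calc (ascPochhammer ℝ n).eval s * (s + n)
        ≤ (K ^ n * (ascPochhammer ℝ n).eval t) * (K * (t + n)) :=
          mul_le_mul ih (h n) (by positivity) (hpos.trans ih)
      _ = K ^ n * K * ((ascPochhammer ℝ n).eval t * (t + n)) := by ring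

lemma add_le_max_one_div_mul_add {s A b : ℝ} (hsA : s ≤ A) (hb : 0 < b) (j : ℕ) :
    s + j ≤ max 1 (A / b) * (b + j) := by
  rcases le_total A b with hAb | hbA
  · calc s + j ≤ 1 * (b + j) := by linarith
      _ ≤ max 1 (A / b) * (b + j) := by gcongr; exact le_max_left _ _
  · calc s + j ≤ A / b * (b + j) := by
          rw [div_mul_eq_mul_div, le_div_iff₀ hb]
          nlinarith [(j.cast_nonneg : (0 : ℝ) ≤ j)]
      _ ≤ max 1 (A / b) * (b + j) := by gcongr; exact le_max_right _ _

lemma hasDerivAt_ascPochhammer_eval {a : ℝ} (ha : 0 < a) (n : ℕ) :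
    HasDerivAt (fun t => (ascPochhammer ℝ n).eval t)
      ((ascPochhammer ℝ n).eval a * ∑ m ∈ range n, 1 / ((m : ℝ) + a)) a := by
  induction n with
  | zero => simpa using hasDerivAt_const a (1 : ℝ)
  | succ n ih =>
    simp only [ascPochhammer_succ_eval]
    refine (ih.mul ((hasDerivAt_id a).add_const (n : ℝ))).congr_deriv ?_
    have : (n : ℝ) + a ≠ 0 := by positivity
    rw [sum_range_succ, id]
    field_simp
    ring

lemma ascPochhammer_eval_mul_sum_le {a : ℝ} (ha : 0 < a) (n : ℕ) :
    (ascPochhammer ℝ n).eval a * ∑ m ∈ range n, 1 / ((m : ℝ) + a) ≤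
      n / a * (ascPochhammer ℝ n).eval a := by
  have hsum : ∑ m ∈ range n, 1 / ((m : ℝ) + a) ≤ n / a := by
    refine (sum_le_card_nsmul _ _ (1 / a) fun m _ => ?_).trans_eq ?_
    · gcongr; exact le_add_of_nonneg_left m.cast_nonneg
    · rw [card_range, nsmul_eq_mul, mul_one_div]
  rw [mul_comm]
  exact mul_le_mul_of_nonneg_right hsum (ascPochhammer_pos n a ha).le

noncomputable def kummerCoeff (b x : ℝ) (n : ℕ) : ℝ :=
  x ^ n / ((ascPochhammer ℝ n).eval b * n.factorial)

lemma kummerM_eq_tsum (a b x : ℝ) :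
    kummerM a b x = ∑' n, (ascPochhammer ℝ n).eval a * kummerCoeff b x n := by
  unfold kummerM kummerCoeff
  congr! 2 with n
  ring

section KummerCoeff

variable {b x : ℝ}

lemma ascPochhammer_eval_mul_abs_kummerCoeff_le {s K : ℝ} (hs : 0 ≤ s) (hb : 0 < b)
    (h : ∀ j : ℕ, s + j ≤ K * (b + j)) (n : ℕ) :
    (ascPochhammer ℝ n).eval s * |kummerCoeff b x n| ≤ (K * |x|) ^ n / n.factorial := by
  have hPb := ascPochhammer_pos n b hb
  calc (ascPochhammer ℝ n).eval s * |kummerCoeff b x n|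
      ≤ K ^ n * (ascPochhammer ℝ n).eval b * |kummerCoeff b x n| := by
        gcongr; exact ascPochhammer_eval_le_pow_mul_eval hs h n
    _ = (K * |x|) ^ n / n.factorial := by
        rw [kummerCoeff, abs_div, abs_pow,
          abs_of_pos (mul_pos hPb (Nat.cast_pos.2 n.factorial_pos))]
        field_simp
        ring

lemma summable_ascPochhammer_eval_mul_kummerCoeff {s : ℝ} (hs : 0 < s) (hb : 0 < b) :
    Summable fun n => (ascPochhammer ℝ n).eval s * kummerCoeff b x n :=
  .of_norm_bounded (Real.summable_pow_div_factorial (max 1 (s / b) * |x|)) fun n => by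
    rw [Real.norm_eq_abs, abs_mul, abs_of_pos (ascPochhammer_pos n s hs)]
    exact ascPochhammer_eval_mul_abs_kummerCoeff_le hs.le hb
      (add_le_max_one_div_mul_add le_rfl hb) n

lemma norm_ascPochhammer_eval_mul_sum_mul_kummerCoeff_le {c t K : ℝ} (hc : 0 < c) (hct : c ≤ t)
    (hb : 0 < b) (h : ∀ j : ℕ, t + j ≤ K * (b + j)) (n : ℕ) :
    ‖(ascPochhammer ℝ n).eval t * (∑ m ∈ range n, 1 / ((m : ℝ) + t)) *
        kummerCoeff b x n‖ ≤
      (2 * K * |x|) ^ n / n.factorial / c := by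
  have ht : 0 < t := hc.trans_le hct
  have hP := ascPochhammer_pos n t ht
  have hS : 0 ≤ ∑ m ∈ range n, 1 / ((m : ℝ) + t) := sum_nonneg fun m _ => by positivity
  have hn : (n : ℝ) / t ≤ 2 ^ n / c := by
    calc (n : ℝ) / t ≤ 2 ^ n / t := by gcongr; exact_mod_cast n.lt_two_pow_self.le
      _ ≤ 2 ^ n / c := by gcongr
  calc ‖(ascPochhammer ℝ n).eval t * (∑ m ∈ range n, 1 / ((m : ℝ) + t)) *
        kummerCoeff b x n‖
      = (ascPochhammer ℝ n).eval t * (∑ m ∈ range n, 1 / ((m : ℝ) + t)) *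
          |kummerCoeff b x n| := by
        rw [Real.norm_eq_abs, abs_mul, abs_of_nonneg (mul_nonneg hP.le hS)]
    _ ≤ n / t * ((ascPochhammer ℝ n).eval t * |kummerCoeff b x n|) :=
        (mul_le_mul_of_nonneg_right (ascPochhammer_eval_mul_sum_le ht n) (abs_nonneg _)).trans_eq
          (mul_assoc _ _ _)
    _ ≤ 2 ^ n / c * ((K * |x|) ^ n / n.factorial) :=
        mul_le_mul hn (ascPochhammer_eval_mul_abs_kummerCoeff_le ht.le hb h n)
          (mul_nonneg hP.le (abs_nonneg _)) (by positivity)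
    _ = (2 * K * |x|) ^ n / n.factorial / c := by ring

lemma hasDerivAt_kummerM_param {a : ℝ} (ha : 0 < a) (hb : 0 < b) :
    HasDerivAt (fun a' => kummerM a' b x)
      (∑' n, (ascPochhammer ℝ n).eval a * (∑ m ∈ range n, 1 / ((m : ℝ) + a)) *
        kummerCoeff b x n) a := by
  have haD : a ∈ Set.Ioo (a / 2) (a + 1) := ⟨by linarith, by linarith⟩
  simp only [kummerM_eq_tsum]
  refine hasDerivAt_tsum_of_isPreconnected
    (g := fun n t => (ascPochhammer ℝ n).eval t * kummerCoeff b x n)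
    (g' := fun n t => (ascPochhammer ℝ n).eval t * (∑ m ∈ range n, 1 / ((m : ℝ) + t)) *
      kummerCoeff b x n)
    ((Real.summable_pow_div_factorial (2 * max 1 ((a + 1) / b) * |x|)).div_const (a / 2))
    isOpen_Ioo isPreconnected_Ioo (fun n t ht => ?_) (fun n t ht => ?_) haD
    (summable_ascPochhammer_eval_mul_kummerCoeff ha hb) haD
  · exact (hasDerivAt_ascPochhammer_eval (by linarith [ht.1]) n).mul_const _
  · exact norm_ascPochhammer_eval_mul_sum_mul_kummerCoeff_le (half_pos ha) ht.1.le hb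
      (add_le_max_one_div_mul_add ht.2.le hb) n

end KummerCoeff

/-- For `a, b > 0` and real `x`, the derivative of `M` with respect to its first
parameter is `∂M/∂a(a,b,x) = Σ_{r=1}^∞ (a)_r x^r/((b)_r r!) · Σ_{m=1}^r 1/(m-1+a)`.
(The sum over `r ≥ 1` is indexed by `r = n+1`, `n : ℕ`, and the inner sum
`Σ_{m=1}^{r} 1/(m-1+a) = Σ_{m=0}^{r-1} 1/(m+a)`.) -/
theorem kummerM_deriv_param (a b x : ℝ) (ha : 0 < a) (hb : 0 < b) :
    deriv (fun a' : ℝ => kummerM a' b x) a =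
      ∑' n : ℕ,
        (ascPochhammer ℝ (n + 1)).eval a * x ^ (n + 1) /
            ((ascPochhammer ℝ (n + 1)).eval b * (n + 1).factorial) *
          ∑ m ∈ Finset.range (n + 1), 1 / ((m : ℝ) + a) := by
  have hsum : Summable fun n => (ascPochhammer ℝ n).eval a *
      (∑ m ∈ range n, 1 / ((m : ℝ) + a)) * kummerCoeff b x n :=
    .of_norm_bounded ((Real.summable_pow_div_factorial (2 * max 1 (a / b) * |x|)).div_const a)
      fun n => norm_ascPochhammer_eval_mul_sum_mul_kummerCoeff_le ha le_rfl hb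
        (add_le_max_one_div_mul_add le_rfl hb) n
  rw [(hasDerivAt_kummerM_param ha hb).deriv, hsum.tsum_eq_zero_add]
  simp only [kummerCoeff, range_zero, sum_empty, mul_zero, zero_mul, zero_add]
  exact tsum_congr fun n => by ring
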